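/- arXiv:2605.14785 — 2 statements merged into one kernel-verified Lean document; each statement's English description precedes it below -/
import Mathlib

section
/- Class-Wise R-SGD Lemma (interference-operator form). Let d ≥ 1, let Y be a nonempty finite set of past classes and fix c ∈ Y. For each y ∈ Y let f_y : E → ℝ be differentiable with gradient ∇f_y, and assume f_c is L_c-smooth in the quadratic-upper-bound sense for some L_c > 0. Fix a current iterate θ_t ∈ E, a learning rate λ > 0, a weight α ∈ (0,1), an integer K > 0, sampling probabilities p : Y → ℝ with p_y ≥ 0 and Σ_{y∈Y} p_y = 1, bias vectors b_y ∈ E for each y ∈ Y, and a new-data full gradient g_D ∈ E. On a probability space (Ω, 𝔉, P) let k_y : Ω → ℕ, B_y : Ω → E (for y ∈ Y) and G : Ω → E be random variables satisfying E[k_y] = α K p_y for every y ∈ Y, E[k_y · B_y] = α K p_y · b_y for every y ∈ Y, and E[G] = g_D. Define the overall stochastic gradient ḡ(ω) = Σ_{y∈Y} (k_y(ω)/K)(∇f_y(θ_t) + B_y(ω)) + (1−α) G(ω) and the update θ_{t+1}(ω) = θ_t − λ ḡ(ω). Assume that k_y, k_y·B_y, G, ‖ḡ‖², and ω ↦ f_c(θ_{t+1}(ω))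 are all integrable, and that ∇f_c(θ_t) ≠ 0. Then E[f_c(θ_{t+1}) − f_c(θ_t)] ≤ −λ α p_c ‖∇f_c(θ_t)‖² + λ ‖∇f_c(θ_t)‖ · I_c + (λ² L_c / 2) · E[‖ḡ‖²], where I_c = α p_c · Interf(b_c) + Σ_{y∈Y, y≠c} α p_y · Interf(b_y) + (1−α) · Interf(g_D) + Σ_{y∈Y, y≠c} α p_y · Interf(∇f_y(θ_t)), and Interf(v) = −⟪v, ∇f_c(θ_t)⟫ / ‖∇f_c(θ_t)‖ is the interference operator at θ_t for class c. -/
open Finset MeasureTheory RealInnerProductSpace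

/-- The interference operator: the negated scalar projection of `v` onto the
reference gradient `w`. -/
noncomputable def interf {d : ℕ} (w v : EuclideanSpace ℝ (Fin d)) : ℝ :=
  -(⟪v, w⟫ : ℝ) / ‖w‖

/-- **Class-Wise R-SGD Lemma (interference-operator form).**
One R-SGD update step bounds the expected change of the class-`c` loss by a descent
term, an interference term `λ‖∇f_c(θ_t)‖ · I_c`, and a curvature term, where `I_c`
aggregates the interference-operator values of the bias vectors, the new-data
gradient, and the other past classes' gradients. -/
theorem classwise_rsgd_lemma_interference
    (d : ℕ) (hd : 1 ≤ d)
    {Y : Type*} [Fintype Y] [Nonempty Y] [DecidableEq Y] (c : Y)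
    (f : Y → EuclideanSpace ℝ (Fin d) → ℝ)
    (gf : Y → EuclideanSpace ℝ (Fin d) → EuclideanSpace ℝ (Fin d))
    (hdiff : ∀ y θ, HasGradientAt (f y) (gf y θ) θ)
    (L : ℝ) (hL : 0 < L)
    (hsmooth : ∀ θ₁ θ₂ : EuclideanSpace ℝ (Fin d),
      f c θ₂ ≤ f c θ₁ + ⟪gf c θ₁, θ₂ - θ₁⟫ + (L / 2) * ‖θ₂ - θ₁‖ ^ 2)
    (θt : EuclideanSpace ℝ (Fin d))
    (lam : ℝ) (hlam : 0 < lam)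
    (α : ℝ) (hα : α ∈ Set.Ioo (0 : ℝ) 1)
    (K : ℕ) (hK : 0 < K)
    (p : Y → ℝ) (hp : ∀ y, 0 ≤ p y) (hpsum : ∑ y, p y = 1)
    (b : Y → EuclideanSpace ℝ (Fin d))
    (gD : EuclideanSpace ℝ (Fin d))
    {Ω : Type*} [MeasurableSpace Ω] (μ : Measure Ω) [IsProbabilityMeasure μ]
    (k : Y → Ω → ℕ)
    (B : Y → Ω → EuclideanSpace ℝ (Fin d))
    (G : Ω → EuclideanSpace ℝ (Fin d))
    (hk_int : ∀ y, Integrable (fun ω => (k y ω : ℝ)) μ)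
    (hkB_int : ∀ y, Integrable (fun ω => (k y ω : ℝ) • B y ω) μ)
    (hG_int : Integrable G μ)
    (hk_mean : ∀ y, ∫ ω, (k y ω : ℝ) ∂μ = α * (K : ℝ) * p y)
    (hkB_mean : ∀ y, ∫ ω, (k y ω : ℝ) • B y ω ∂μ = (α * (K : ℝ) * p y) • b y)
    (hG_mean : ∫ ω, G ω ∂μ = gD)
    (gbar : Ω → EuclideanSpace ℝ (Fin d))
    (hgbar : ∀ ω, gbar ω =
      ∑ y, ((k y ω : ℝ) / (K : ℝ)) • (gf y θt + B y ω) + (1 - α) • G ω)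
    (θnext : Ω → EuclideanSpace ℝ (Fin d))
    (hθnext : ∀ ω, θnext ω = θt - lam • gbar ω)
    (hgbar_sq_int : Integrable (fun ω => ‖gbar ω‖ ^ 2) μ)
    (hf_int : Integrable (fun ω => f c (θnext ω)) μ)
    (hgrad_ne : gf c θt ≠ 0) :
    ∫ ω, (f c (θnext ω) - f c θt) ∂μ ≤
      -lam * (α * p c) * ‖gf c θt‖ ^ 2
      + lam * ‖gf c θt‖ *
        (α * p c * interf (gf c θt) (b c)
          + ∑ y ∈ Finset.univ.erase c, α * p y * interf (gf c θt) (b y)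
          + (1 - α) * interf (gf c θt) gD
          + ∑ y ∈ Finset.univ.erase c, α * p y * interf (gf c θt) (gf y θt))
      + (lam ^ 2 * L / 2) * ∫ ω, ‖gbar ω‖ ^ 2 ∂μ := by
  classical
  set w := gf c θt with hw_def
  have hKne : (K : ℝ) ≠ 0 := Nat.cast_ne_zero.mpr hK.ne'
  have hwnorm : ‖w‖ ≠ 0 := norm_ne_zero_iff.mpr hgrad_ne
  have hgbar' : ∀ ω, gbar ω =
      ∑ y, ((K:ℝ)⁻¹ • ((k y ω : ℝ) • gf y θt) + (K:ℝ)⁻¹ • ((k y ω : ℝ) • B y ω))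
        + (1 - α) • G ω := by
    intro ω
    rw [hgbar]
    congr 1
    refine Finset.sum_congr rfl fun y _ => ?_
    simp only [div_eq_inv_mul, mul_smul, smul_add]
  have hterm_int : ∀ y : Y, Integrable (fun ω =>
      (K:ℝ)⁻¹ • ((k y ω : ℝ) • gf y θt) + (K:ℝ)⁻¹ • ((k y ω : ℝ) • B y ω)) μ := by
    intro y
    exact (((hk_int y).smul_const (gf y θt)).smul ((K:ℝ)⁻¹)).add
      ((hkB_int y).smul ((K:ℝ)⁻¹))
  have hgbar_int : Integrable gbar μ := by
    have : Integrable (fun ω =>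
        ∑ y, ((K:ℝ)⁻¹ • ((k y ω : ℝ) • gf y θt) + (K:ℝ)⁻¹ • ((k y ω : ℝ) • B y ω))
          + (1 - α) • G ω) μ :=
      (integrable_finset_sum _ fun y _ => hterm_int y).add (hG_int.smul (1 - α))
    exact this.congr (Filter.Eventually.of_forall fun ω => (hgbar' ω).symm)
  have hmean : ∫ ω, gbar ω ∂μ =
      ∑ y, ((α * p y) • gf y θt + (α * p y) • b y) + (1 - α) • gD := by
    have h1 : ∫ ω, gbar ω ∂μ = ∫ ω,
        (∑ y, ((K:ℝ)⁻¹ • ((k y ω : ℝ) • gf y θt) + (K:ℝ)⁻¹ • ((k y ω : ℝ) • B y ω))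
          + (1 - α) • G ω) ∂μ :=
      integral_congr_ae (Filter.Eventually.of_forall hgbar')
    have hG2 : Integrable (fun ω => (1 - α) • G ω) μ := hG_int.smul (1 - α)
    have hA : ∀ y : Y, Integrable (fun ω => (K:ℝ)⁻¹ • ((k y ω : ℝ) • gf y θt)) μ :=
      fun y => ((hk_int y).smul_const (gf y θt)).smul ((K:ℝ)⁻¹)
    have hB2 : ∀ y : Y, Integrable (fun ω => (K:ℝ)⁻¹ • ((k y ω : ℝ) • B y ω)) μ :=
      fun y => (hkB_int y).smul ((K:ℝ)⁻¹)
    rw [h1, integral_add (integrable_finset_sum _ fun y _ => hterm_int y)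
        hG2, integral_finset_sum _ fun y _ => hterm_int y,
        integral_smul, hG_mean]
    congr 1
    refine Finset.sum_congr rfl fun y _ => ?_
    rw [integral_add (hA y) (hB2 y), integral_smul, integral_smul,
        integral_smul_const, hk_mean y, hkB_mean y, smul_smul, smul_smul]
    congr 1 <;> · congr 1; field_simp
  have hpt : ∀ ω, f c (θnext ω) - f c θt ≤
      -lam * ⟪w, gbar ω⟫ + (lam ^ 2 * L / 2) * ‖gbar ω‖ ^ 2 := by
    intro ω
    have h := hsmooth θt (θnext ω)
    have hdiffv : θnext ω - θt = -(lam • gbar ω) := by rw [hθnext]; abel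
    rw [hdiffv] at h
    have hi : (⟪w, -(lam • gbar ω)⟫ : ℝ) = -lam * ⟪w, gbar ω⟫ := by
      rw [inner_neg_right, real_inner_smul_right]; ring
    have hn : ‖-(lam • gbar ω)‖ ^ 2 = lam ^ 2 * ‖gbar ω‖ ^ 2 := by
      rw [norm_neg, norm_smul, mul_pow, Real.norm_eq_abs, sq_abs]
    rw [hi, hn] at h
    nlinarith [h]
  have hinner_int : Integrable (fun ω => (⟪w, gbar ω⟫ : ℝ)) μ :=
    hgbar_int.const_inner w
  have hlhs_int : Integrable (fun ω => f c (θnext ω) - f c θt) μ :=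
    hf_int.sub (integrable_const _)
  have hrhs_int : Integrable (fun ω =>
      -lam * ⟪w, gbar ω⟫ + (lam ^ 2 * L / 2) * ‖gbar ω‖ ^ 2) μ :=
    (hinner_int.const_mul _).add (hgbar_sq_int.const_mul _)
  have hint_le : ∫ ω, (f c (θnext ω) - f c θt) ∂μ ≤
      ∫ ω, (-lam * ⟪w, gbar ω⟫ + (lam ^ 2 * L / 2) * ‖gbar ω‖ ^ 2) ∂μ :=
    integral_mono hlhs_int hrhs_int hpt
  have hrhs_eval : ∫ ω, (-lam * ⟪w, gbar ω⟫ + (lam ^ 2 * L / 2) * ‖gbar ω‖ ^ 2) ∂μ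
      = -lam * ⟪w, ∫ ω, gbar ω ∂μ⟫ + (lam ^ 2 * L / 2) * ∫ ω, ‖gbar ω‖ ^ 2 ∂μ := by
    rw [integral_add (hinner_int.const_mul _) (hgbar_sq_int.const_mul _),
        integral_const_mul, integral_const_mul, integral_inner hgbar_int]
  refine hint_le.trans ?_
  rw [hrhs_eval, hmean]
  have hsplit : ∀ v : Y → EuclideanSpace ℝ (Fin d),
      (⟪w, ∑ y, (α * p y) • v y⟫ : ℝ)
        = α * p c * ⟪w, v c⟫ + ∑ y ∈ Finset.univ.erase c, α * p y * ⟪w, v y⟫ := by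
    intro v
    rw [inner_sum]
    simp_rw [real_inner_smul_right]
    exact (Finset.add_sum_erase _ _ (Finset.mem_univ c)).symm
  have hIc : (⟪w, ∑ y, ((α * p y) • gf y θt + (α * p y) • b y) + (1 - α) • gD⟫ : ℝ)
      = α * p c * ⟪w, w⟫ + ∑ y ∈ Finset.univ.erase c, α * p y * ⟪w, gf y θt⟫
        + (α * p c * ⟪w, b c⟫ + ∑ y ∈ Finset.univ.erase c, α * p y * ⟪w, b y⟫)
        + (1 - α) * ⟪w, gD⟫ := by
    rw [inner_add_right, real_inner_smul_right]
    have hs : (⟪w, ∑ y, ((α * p y) • gf y θt + (α * p y) • b y)⟫ : ℝ)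
        = ⟪w, ∑ y, (α * p y) • gf y θt⟫ + ⟪w, ∑ y, (α * p y) • b y⟫ := by
      rw [← inner_add_right, ← Finset.sum_add_distrib]
    rw [hs, hsplit fun y => gf y θt, hsplit b]
    try ring
  rw [hIc]
  have hww : (⟪w, w⟫ : ℝ) = ‖w‖ ^ 2 := real_inner_self_eq_norm_sq w
  have hintf : ∀ v : EuclideanSpace ℝ (Fin d),
      ‖w‖ * interf w v = -⟪w, v⟫ := by
    intro v
    rw [interf, real_inner_comm]
    field_simp
    try ring
  have hsum1 : lam * ‖w‖ * ∑ y ∈ Finset.univ.erase c, α * p y * interf w (b y)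
      = -lam * ∑ y ∈ Finset.univ.erase c, α * p y * ⟪w, b y⟫ := by
    rw [Finset.mul_sum, Finset.mul_sum]
    refine Finset.sum_congr rfl fun y _ => ?_
    linear_combination (lam * (α * p y)) * hintf (b y)
  have hsum2 : lam * ‖w‖ * ∑ y ∈ Finset.univ.erase c, α * p y * interf w (gf y θt)
      = -lam * ∑ y ∈ Finset.univ.erase c, α * p y * ⟪w, gf y θt⟫ := by
    rw [Finset.mul_sum, Finset.mul_sum]
    refine Finset.sum_congr rfl fun y _ => ?_
    linear_combination (lam * (α * p y)) * hintf (gf y θt)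
  have e : lam * ‖w‖ * (α * p c * interf w (b c)
      + ∑ y ∈ Finset.univ.erase c, α * p y * interf w (b y)
      + (1 - α) * interf w gD
      + ∑ y ∈ Finset.univ.erase c, α * p y * interf w (gf y θt))
      = -lam * (α * p c * ⟪w, b c⟫ + ∑ y ∈ Finset.univ.erase c, α * p y * ⟪w, b y⟫)
        - lam * (1 - α) * ⟪w, gD⟫
        - lam * ∑ y ∈ Finset.univ.erase c, α * p y * ⟪w, gf y θt⟫ := by
    linear_combination (lam * (α * p c)) * hintf (b c) + (lam * (1 - α)) * hintf gD
      + hsum1 + hsum2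
  refine le_of_eq ?_
  linear_combination (-(1:ℝ)) * e - (lam * (α * p c)) * hww
end

section
/- Class-Wise R-SGD Lemma (inner-product form, no nondegeneracy hypothesis). Let d ≥ 1, let Y be a nonempty finite set of past classes and fix c ∈ Y. For each y ∈ Y let f_y : E → ℝ be differentiable with gradient ∇f_y, and assume f_c is L_c-smooth in the quadratic-upper-bound sense for some L_c > 0. Fix a current iterate θ_t ∈ E, a learning rate λ > 0, a weight α ∈ (0,1), an integer K > 0, sampling probabilities p : Y → ℝ with p_y ≥ 0 and Σ_{y∈Y} p_y = 1, bias vectors b_y ∈ E for each y ∈ Y, and a new-data full gradient g_D ∈ E. On a probability space (Ω, 𝔉, P) let k_y : Ω → ℕ, B_y : Ω → E (for y ∈ Y) and G : Ω → E be random variables satisfying E[k_y] = α K p_y for every y ∈ Y, E[k_y · B_y] = α K p_y · b_y for every y ∈ Y, and E[G] = g_D. Define the overall stochastic gradient ḡ(ω) = Σ_{y∈Y} (k_y(ω)/K)(∇f_y(θ_t) + B_y(ω)) + (1−α) G(ω) and the update θ_{t+1}(ω) = θ_t − λ ḡ(ω). Assume that k_y, k_y·B_y, G, ‖ḡ‖²,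 and ω ↦ f_c(θ_{t+1}(ω)) are all integrable. Then E[f_c(θ_{t+1}) − f_c(θ_t)] ≤ −λ α p_c ‖∇f_c(θ_t)‖² − λ ⟪u_c, ∇f_c(θ_t)⟫ + (λ² L_c / 2) · E[‖ḡ‖²], where u_c = α p_c · b_c + Σ_{y∈Y, y≠c} α p_y · (b_y + ∇f_y(θ_t)) + (1−α) g_D. -/
open Finset MeasureTheory RealInnerProductSpace

/-- **Class-Wise R-SGD Lemma (inner-product form, no nondegeneracy hypothesis).**
One R-SGD update step bounds the expected change of the class-`c` loss by a descent
term, an interference inner-product term, and a curvature term. -/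
theorem classwise_rsgd_lemma_inner_product
    (d : ℕ) (hd : 1 ≤ d)
    {Y : Type*} [Fintype Y] [Nonempty Y] [DecidableEq Y] (c : Y)
    (f : Y → EuclideanSpace ℝ (Fin d) → ℝ)
    (gf : Y → EuclideanSpace ℝ (Fin d) → EuclideanSpace ℝ (Fin d))
    (hdiff : ∀ y θ, HasGradientAt (f y) (gf y θ) θ)
    (L : ℝ) (hL : 0 < L)
    (hsmooth : ∀ θ₁ θ₂ : EuclideanSpace ℝ (Fin d),
      f c θ₂ ≤ f c θ₁ + ⟪gf c θ₁, θ₂ - θ₁⟫ + (L / 2) * ‖θ₂ - θ₁‖ ^ 2)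
    (θt : EuclideanSpace ℝ (Fin d))
    (lam : ℝ) (hlam : 0 < lam)
    (α : ℝ) (hα : α ∈ Set.Ioo (0 : ℝ) 1)
    (K : ℕ) (hK : 0 < K)
    (p : Y → ℝ) (hp : ∀ y, 0 ≤ p y) (hpsum : ∑ y, p y = 1)
    (b : Y → EuclideanSpace ℝ (Fin d))
    (gD : EuclideanSpace ℝ (Fin d))
    {Ω : Type*} [MeasurableSpace Ω] (μ : Measure Ω) [IsProbabilityMeasure μ]
    (k : Y → Ω → ℕ)
    (B : Y → Ω → EuclideanSpace ℝ (Fin d))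
    (G : Ω → EuclideanSpace ℝ (Fin d))
    (hk_int : ∀ y, Integrable (fun ω => (k y ω : ℝ)) μ)
    (hkB_int : ∀ y, Integrable (fun ω => (k y ω : ℝ) • B y ω) μ)
    (hG_int : Integrable G μ)
    (hk_mean : ∀ y, ∫ ω, (k y ω : ℝ) ∂μ = α * (K : ℝ) * p y)
    (hkB_mean : ∀ y, ∫ ω, (k y ω : ℝ) • B y ω ∂μ = (α * (K : ℝ) * p y) • b y)
    (hG_mean : ∫ ω, G ω ∂μ = gD)
    (gbar : Ω → EuclideanSpace ℝ (Fin d))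
    (hgbar : ∀ ω, gbar ω =
      ∑ y, ((k y ω : ℝ) / (K : ℝ)) • (gf y θt + B y ω) + (1 - α) • G ω)
    (θnext : Ω → EuclideanSpace ℝ (Fin d))
    (hθnext : ∀ ω, θnext ω = θt - lam • gbar ω)
    (hgbar_sq_int : Integrable (fun ω => ‖gbar ω‖ ^ 2) μ)
    (hf_int : Integrable (fun ω => f c (θnext ω)) μ) :
    ∫ ω, (f c (θnext ω) - f c θt) ∂μ ≤
      -lam * (α * p c) * ‖gf c θt‖ ^ 2
      - lam * ⟪(α * p c) • b c
          + ∑ y ∈ Finset.univ.erase c, (α * p y) • (b y + gf y θt)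
          + (1 - α) • gD, gf c θt⟫
      + (lam ^ 2 * L / 2) * ∫ ω, ‖gbar ω‖ ^ 2 ∂μ := by

  have hKpos : (0:ℝ) < (K:ℝ) := by exact_mod_cast hK
  set v := gf c θt with hv
  -- rewrite gbar summand
  have hsummand : ∀ ω, ∀ y : Y,
      ((k y ω : ℝ) / (K : ℝ)) • (gf y θt + B y ω)
        = ((k y ω : ℝ) / (K : ℝ)) • gf y θt
          + ((K:ℝ)⁻¹) • ((k y ω : ℝ) • B y ω) := by
    intro ω y
    rw [smul_add, smul_smul]
    congr 2
    field_simp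
  have hgbar' : ∀ ω, gbar ω =
      (∑ y, (((k y ω : ℝ) / (K : ℝ)) • gf y θt
          + ((K:ℝ)⁻¹) • ((k y ω : ℝ) • B y ω))) + (1 - α) • G ω := by
    intro ω
    rw [hgbar ω]
    congr 1
    exact Finset.sum_congr rfl fun y _ => hsummand ω y
  have hkB_int' : ∀ y : Y, Integrable (fun ω => ((K:ℝ)⁻¹) • ((k y ω : ℝ) • B y ω)) μ :=
    fun y => (hkB_int y).smul ((K:ℝ)⁻¹)
  have hG_int' : Integrable (fun ω => (1 - α) • G ω) μ := hG_int.smul (1 - α)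
  have hterm_int : ∀ y : Y, Integrable (fun ω =>
      ((k y ω : ℝ) / (K : ℝ)) • gf y θt
        + ((K:ℝ)⁻¹) • ((k y ω : ℝ) • B y ω)) μ := by
    intro y
    exact (((hk_int y).div_const _).smul_const _).add (hkB_int' y)
  have hgbar_int : Integrable gbar μ := by
    have : Integrable (fun ω =>
        (∑ y, (((k y ω : ℝ) / (K : ℝ)) • gf y θt
            + ((K:ℝ)⁻¹) • ((k y ω : ℝ) • B y ω))) + (1 - α) • G ω) μ :=
      (integrable_finset_sum _ fun y _ => hterm_int y).add hG_int'
    exact this.congr (Filter.Eventually.of_forall fun ω => (hgbar' ω).symm)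
  -- mean of gbar
  have hterm_mean : ∀ y : Y,
      (∫ ω, (((k y ω : ℝ) / (K : ℝ)) • gf y θt
          + ((K:ℝ)⁻¹) • ((k y ω : ℝ) • B y ω)) ∂μ)
        = (α * p y) • (gf y θt + b y) := by
    intro y
    rw [integral_add (((hk_int y).div_const _).smul_const _) (hkB_int' y),
      integral_smul_const, integral_smul, hkB_mean y]
    have h1 : ∫ ω, (k y ω : ℝ) / (K:ℝ) ∂μ = α * p y := by
      rw [integral_div, hk_mean y]
      field_simp
    rw [h1, smul_smul, smul_add]
    congr 2
    field_simp
  have hgbar_mean : ∫ ω, gbar ω ∂μ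
      = (∑ y, (α * p y) • (gf y θt + b y)) + (1 - α) • gD := by
    rw [integral_congr_ae (Filter.Eventually.of_forall hgbar'),
      integral_add (integrable_finset_sum _ fun y _ => hterm_int y) hG_int',
      integral_finset_sum _ fun y _ => hterm_int y, integral_smul, hG_mean]
    congr 1
    exact Finset.sum_congr rfl fun y _ => hterm_mean y
  set u := (α * p c) • b c
      + ∑ y ∈ Finset.univ.erase c, (α * p y) • (b y + gf y θt)
      + (1 - α) • gD with hu
  have hgbar_mean' : ∫ ω, gbar ω ∂μ = (α * p c) • v + u := by
    rw [hgbar_mean, hu]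
    rw [← Finset.add_sum_erase _ _ (Finset.mem_univ c)]
    rw [smul_add]
    have : ∀ y : Y, (α * p y) • (gf y θt + b y) = (α * p y) • (b y + gf y θt) := by
      intro y; rw [add_comm]
    simp only [this]
    abel
  -- pointwise bound
  have hpt : ∀ ω, f c (θnext ω) - f c θt ≤
      -lam * ⟪v, gbar ω⟫ + (lam ^ 2 * L / 2) * ‖gbar ω‖ ^ 2 := by
    intro ω
    have h := hsmooth θt (θnext ω)
    have hθ : θnext ω - θt = -(lam • gbar ω) := by
      rw [hθnext ω]; abel
    rw [hθ] at h
    have h1 : ⟪v, -(lam • gbar ω)⟫ = -lam * ⟪v, gbar ω⟫ := by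
      rw [inner_neg_right, real_inner_smul_right]; ring
    have h2 : ‖-(lam • gbar ω)‖ ^ 2 = lam ^ 2 * ‖gbar ω‖ ^ 2 := by
      rw [norm_neg, norm_smul, mul_pow]
      congr 1
      rw [Real.norm_eq_abs, sq_abs]
    rw [h1, h2] at h
    nlinarith [h]
  -- integrate
  have hrhs_int : Integrable (fun ω =>
      -lam * ⟪v, gbar ω⟫ + (lam ^ 2 * L / 2) * ‖gbar ω‖ ^ 2) μ :=
    ((hgbar_int.const_inner v).const_mul _).add (hgbar_sq_int.const_mul _)
  have hmono : ∫ ω, (f c (θnext ω) - f c θt) ∂μ ≤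
      ∫ ω, (-lam * ⟪v, gbar ω⟫ + (lam ^ 2 * L / 2) * ‖gbar ω‖ ^ 2) ∂μ := by
    apply integral_mono (hf_int.sub (integrable_const _)) hrhs_int
    intro ω
    exact hpt ω
  have hint_eq : ∫ ω, (-lam * ⟪v, gbar ω⟫ + (lam ^ 2 * L / 2) * ‖gbar ω‖ ^ 2) ∂μ
      = -lam * ⟪v, ∫ ω, gbar ω ∂μ⟫ + (lam ^ 2 * L / 2) * ∫ ω, ‖gbar ω‖ ^ 2 ∂μ := by
    rw [integral_add ((hgbar_int.const_inner v).const_mul _) (hgbar_sq_int.const_mul _),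
      integral_const_mul, integral_const_mul, integral_inner hgbar_int]
  have hinner : ⟪v, ∫ ω, gbar ω ∂μ⟫ = (α * p c) * ‖v‖ ^ 2 + ⟪u, v⟫ := by
    rw [hgbar_mean', inner_add_right, real_inner_smul_right,
      real_inner_self_eq_norm_sq, real_inner_comm]
  calc ∫ ω, (f c (θnext ω) - f c θt) ∂μ
      ≤ -lam * ⟪v, ∫ ω, gbar ω ∂μ⟫ + (lam ^ 2 * L / 2) * ∫ ω, ‖gbar ω‖ ^ 2 ∂μ := by
        rw [← hint_eq]; exact hmono
    _ = -lam * (α * p c) * ‖v‖ ^ 2 - lam * ⟪u, v⟫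
        + (lam ^ 2 * L / 2) * ∫ ω, ‖gbar ω‖ ^ 2 ∂μ := by
        rw [hinner]; ring
end
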